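/- Let M be a graph with at least two connected components M1, ..., Mt, and let G be the join of the complements of the connected components, G = complement(M1) ∇ ... ∇ complement(Mt). Then the metamour graph of G is M. In particular, if M is k-regular, then G is k-metamour-regular. -/

import Mathlib

namespace SimpleGraph

variable {V : Type*}

/-- The metamour graph of `G`: same vertices, adjacency = distance exactly 2 in `G`. -/
def metamour (G : SimpleGraph V) : SimpleGraph V where
  Adj u v := G.dist u v = 2
  symm := by
    constructor
    intro u v h
    rwa [dist_comm]
  loopless := by
    constructor
    intro v h
    simp [dist_self] at h

/-- The metamour-degree of a vertex: the number of its metamours. -/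
noncomputable def metamourDegree (G : SimpleGraph V) (v : V) : ℕ :=
  {u | G.metamour.Adj v u}.ncard

end SimpleGraph

/-!
On the vertex set of `M`, the join of the complements of its components is exactly `Mᶜ`.
Two vertices adjacent in `M` are non-adjacent in `Mᶜ`, and any vertex outside their
component of `M` (one exists since `M` is disconnected) is an `Mᶜ`-neighbour of both, so
they are at distance 2 in `Mᶜ`. Conversely, vertices at distance 2 in `Mᶜ` are distinct
and not `Mᶜ`-adjacent, that is, adjacent in `M`.
-/
namespace SimpleGraph

variable {V : Type*} {G : SimpleGraph V} {u v w : V}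

lemma dist_eq_two_iff :
    G.dist u v = 2 ↔ u ≠ v ∧ ¬G.Adj u v ∧ (G.commonNeighbors u v).Nonempty := by
  rw [dist, ENat.toNat_eq_iff two_ne_zero, Nat.cast_ofNat, edist_eq_two_iff]

lemma exists_not_reachable_of_ne {c d : G.ConnectedComponent} (hcd : c ≠ d) (u : V) :
    ∃ w, ¬G.Reachable u w := by
  by_contra! h
  induction c using ConnectedComponent.ind
  induction d using ConnectedComponent.ind
  exact hcd (ConnectedComponent.sound ((h _).symm.trans (h _)))

lemma Adj.mem_commonNeighbors_compl (huv : G.Adj u v) (huw : ¬G.Reachable u w) :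
    w ∈ Gᶜ.commonNeighbors u v := by
  have hvw : ¬G.Reachable v w := fun hvw ↦ huw (huv.reachable.trans hvw)
  exact ⟨(G.reachable_or_compl_adj u w).resolve_left huw,
    (G.reachable_or_compl_adj v w).resolve_left hvw⟩

lemma metamour_compl {c d : G.ConnectedComponent} (hcd : c ≠ d) : Gᶜ.metamour = G := by
  ext u v
  change Gᶜ.dist u v = 2 ↔ G.Adj u v
  rw [dist_eq_two_iff, compl_adj]
  refine ⟨fun ⟨huv, hnadj, _⟩ ↦ not_not.mp fun h ↦ hnadj ⟨huv, h⟩, fun huv ↦ ?_⟩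
  obtain ⟨w, huw⟩ := exists_not_reachable_of_ne hcd u
  exact ⟨huv.ne, fun h ↦ h.2 huv, w, huv.mem_commonNeighbors_compl huw⟩

end SimpleGraph

/-- Let M be a graph with at least two connected components. The join
of the complements of the connected components of M (which, as a graph on the
vertex set of M, is exactly the complement of M) has metamour graph M; in
particular, if M is k-regular then this join is k-metamour-regular. -/
theorem metamour_of_join_of_component_complements {V : Type*} (M : SimpleGraph V)
    (hM : ∃ c d : M.ConnectedComponent, c ≠ d) (k : ℕ) :
    (Mᶜ).metamour = M ∧
      ((∀ v : V, {u | M.Adj v u}.ncard = k) → ∀ v : V, (Mᶜ).metamourDegree v = k) := by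
  obtain ⟨c, d, hcd⟩ := hM
  have hmeta : (Mᶜ).metamour = M := SimpleGraph.metamour_compl hcd
  refine ⟨hmeta, fun hreg v ↦ ?_⟩
  rw [SimpleGraph.metamourDegree, hmeta]
  exact hreg v
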